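/- arXiv:2601.02892 — 2 statements merged into one kernel-verified Lean document; each statement's English description precedes it below -/
import Mathlib

section
/- Let G̃ be obtained by Construction 1 from (G, H, v_c), with adjacency matrix Ã, and write v_c^1 = (v_c,1), v_c^2 = (v_c,2). Then for every natural number k and every vertex v' ∈ V(H), the v'-th entry of Ã^k(e_{v_c^1} − e_{v_c^2}) is zero. -/
open SimpleGraph Matrix

/-- `v` and `w` lie in the same orbit under the automorphisms of `G` fixing `vc`. -/
def SameOrbit {V : Type*} (G : SimpleGraph V) (vc v w : V) : Prop :=
  ∃ φ : G ≃g G, φ vc = vc ∧ φ v = w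

/-- `Gt` is obtained from `(G, H, vc)` by Construction 1. -/
def IsConstruction1 {V W : Type*} (G : SimpleGraph V) (H : SimpleGraph W)
    (vc : V) (Gt : SimpleGraph (V × Fin 2 ⊕ W)) : Prop :=
  (∀ i : Fin 2, ∀ v w : V, Gt.Adj (Sum.inl (v, i)) (Sum.inl (w, i)) ↔ G.Adj v w) ∧
  (∀ v w : V, ¬ Gt.Adj (Sum.inl (v, 0)) (Sum.inl (w, 1))) ∧
  (∀ v w : W, Gt.Adj (Sum.inr v) (Sum.inr w) ↔ H.Adj v w) ∧
  (∀ w : W, ∀ u : V,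
    Nat.card {v : V // SameOrbit G vc u v ∧ Gt.Adj (Sum.inl (v, 0)) (Sum.inr w)} =
    Nat.card {v : V // SameOrbit G vc u v ∧ Gt.Adj (Sum.inl (v, 1)) (Sum.inr w)})

section Aux

variable {V W : Type*} {G : SimpleGraph V} {vc : V}

lemma sameOrbit_refl (G : SimpleGraph V) (vc v : V) : SameOrbit G vc v v :=
  ⟨RelIso.refl _, rfl, rfl⟩

lemma sameOrbit_symm {u v : V} (h : SameOrbit G vc u v) : SameOrbit G vc v u := by
  obtain ⟨φ, h1, h2⟩ := h
  refine ⟨φ.symm, ?_, ?_⟩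
  · conv_lhs => rw [← h1]
    exact φ.symm_apply_apply vc
  · conv_lhs => rw [← h2]
    exact φ.symm_apply_apply u

lemma sameOrbit_trans {u v w : V} (h1 : SameOrbit G vc u v) (h2 : SameOrbit G vc v w) :
    SameOrbit G vc u w := by
  obtain ⟨φ, a1, a2⟩ := h1
  obtain ⟨ψ, b1, b2⟩ := h2
  exact ⟨φ.trans ψ, by simp [RelIso.trans_apply, a1, b1], by simp [RelIso.trans_apply, a2, b2]⟩

/-- The orbit equivalence relation as a setoid. -/
def orbitSetoid (G : SimpleGraph V) (vc : V) : Setoid V :=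
  ⟨SameOrbit G vc, fun v => sameOrbit_refl G vc v, sameOrbit_symm, sameOrbit_trans⟩

/-- The invariant preserved by the adjacency matrix. -/
def Good (G : SimpleGraph V) (vc : V) (x : V × Fin 2 ⊕ W → ℝ) : Prop :=
  (∀ w : W, x (Sum.inr w) = 0) ∧
  (∀ v : V, x (Sum.inl (v, 1)) = - x (Sum.inl (v, 0))) ∧
  (∀ u v : V, SameOrbit G vc u v → x (Sum.inl (u, 0)) = x (Sum.inl (v, 0)))

variable [Fintype V] [Fintype W] [DecidableEq V] [DecidableEq W]
variable {H : SimpleGraph W} {Gt : SimpleGraph (V × Fin 2 ⊕ W)} [DecidableRel Gt.Adj]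

lemma mulVec_apply_eq (x : V × Fin 2 ⊕ W → ℝ) (i : V × Fin 2 ⊕ W) :
    (Gt.adjMatrix ℝ *ᵥ x) i = ∑ j, (if Gt.Adj i j then x j else 0) := by
  rw [adjMatrix_mulVec_apply, neighborFinset_eq_filter, Finset.sum_filter]

lemma good_step (hC : IsConstruction1 G H vc Gt) {x : V × Fin 2 ⊕ W → ℝ}
    (hx : Good G vc x) : Good G vc (Gt.adjMatrix ℝ *ᵥ x) := by
  classical
  obtain ⟨hadj, hcross, hH, hcount⟩ := hC
  obtain ⟨hx0, hx1, hx2⟩ := hx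
  have hcross' : ∀ v w : V, ¬ Gt.Adj (Sum.inl (v, 1)) (Sum.inl (w, 0)) := fun v w h =>
    hcross w v h.symm
  -- reduce a mulVec entry at an `inl` vertex to a sum over `V`
  have key : ∀ (v : V) (i : Fin 2),
      (Gt.adjMatrix ℝ *ᵥ x) (Sum.inl (v, i)) =
        ∑ u : V, (if G.Adj v u then x (Sum.inl (u, i)) else 0) := by
    intro v i
    rw [mulVec_apply_eq, Fintype.sum_sum_type]
    have h2 : ∀ w : W, (if Gt.Adj (Sum.inl (v, i)) (Sum.inr w) then x (Sum.inr w) else 0) = 0 := by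
      intro w; rw [hx0]; simp
    rw [Finset.sum_congr rfl (fun w _ => h2 w), Finset.sum_const_zero, add_zero,
      Fintype.sum_prod_type]
    refine Finset.sum_congr rfl fun u _ => ?_
    rw [Fin.sum_univ_two]
    have hi : i = 0 ∨ i = 1 := by omega
    rcases hi with rfl | rfl
    · rw [if_neg (hcross v u), add_zero]
      by_cases h : G.Adj v u
      · rw [if_pos ((hadj 0 v u).mpr h), if_pos h]
      · rw [if_neg (fun hh => h ((hadj 0 v u).mp hh)), if_neg h]
    · rw [if_neg (hcross' v u), zero_add]
      by_cases h : G.Adj v u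
      · rw [if_pos ((hadj 1 v u).mpr h), if_pos h]
      · rw [if_neg (fun hh => h ((hadj 1 v u).mp hh)), if_neg h]
  refine ⟨?_, ?_, ?_⟩
  · -- zero on W vertices
    intro w
    rw [mulVec_apply_eq, Fintype.sum_sum_type]
    have h2 : ∀ w' : W,
        (if Gt.Adj (Sum.inr w) (Sum.inr w') then x (Sum.inr w') else 0) = 0 := by
      intro w'; rw [hx0]; simp
    rw [Finset.sum_congr rfl (fun w' _ => h2 w'), Finset.sum_const_zero, add_zero,
      Fintype.sum_prod_type]
    have hsum : ∀ u : V,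
        (∑ i : Fin 2, if Gt.Adj (Sum.inr w) (Sum.inl (u, i)) then x (Sum.inl (u, i)) else 0) =
          x (Sum.inl (u, 0)) *
            ((if Gt.Adj (Sum.inl (u, 0)) (Sum.inr w) then (1 : ℝ) else 0) -
             (if Gt.Adj (Sum.inl (u, 1)) (Sum.inr w) then (1 : ℝ) else 0)) := by
      intro u
      rw [Fin.sum_univ_two, hx1]
      have e0 : Gt.Adj (Sum.inr w) (Sum.inl (u, 0)) ↔ Gt.Adj (Sum.inl (u, 0)) (Sum.inr w) :=
        Gt.adj_comm _ _
      have e1 : Gt.Adj (Sum.inr w) (Sum.inl (u, 1)) ↔ Gt.Adj (Sum.inl (u, 1)) (Sum.inr w) :=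
        Gt.adj_comm _ _
      by_cases h0 : Gt.Adj (Sum.inl (u, 0)) (Sum.inr w) <;>
        by_cases h1 : Gt.Adj (Sum.inl (u, 1)) (Sum.inr w) <;>
        simp [e0, e1, h0, h1] <;> ring
    rw [Finset.sum_congr rfl (fun u _ => hsum u)]
    -- split the sum over V into orbit fibers
    rw [← Finset.sum_fiberwise Finset.univ (Quotient.mk (orbitSetoid G vc))
      (fun u => x (Sum.inl (u, 0)) *
        ((if Gt.Adj (Sum.inl (u, 0)) (Sum.inr w) then (1 : ℝ) else 0) -
         (if Gt.Adj (Sum.inl (u, 1)) (Sum.inr w) then (1 : ℝ) else 0)))]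
    refine Finset.sum_eq_zero fun c _ => ?_
    set u0 := c.out with hu0
    have hmem : ∀ u : V, Quotient.mk (orbitSetoid G vc) u = c ↔ SameOrbit G vc u0 u := by
      intro u
      constructor
      · intro h
        have : Quotient.mk (orbitSetoid G vc) u = Quotient.mk (orbitSetoid G vc) u0 := by
          rw [h, hu0]; exact (Quotient.out_eq c).symm
        exact sameOrbit_symm (Quotient.eq''.mp this)
      · intro h
        rw [← Quotient.out_eq c, ← hu0]
        exact Quotient.sound (sameOrbit_symm h)
    have hconst : ∀ u ∈ Finset.univ.filter
        (fun u => Quotient.mk (orbitSetoid G vc) u = c),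
        x (Sum.inl (u, 0)) = x (Sum.inl (u0, 0)) := by
      intro u hu
      rw [Finset.mem_filter] at hu
      exact (hx2 u0 u ((hmem u).mp hu.2)).symm
    calc (∑ u ∈ Finset.univ.filter (fun u => Quotient.mk (orbitSetoid G vc) u = c),
          x (Sum.inl (u, 0)) *
            ((if Gt.Adj (Sum.inl (u, 0)) (Sum.inr w) then (1 : ℝ) else 0) -
             (if Gt.Adj (Sum.inl (u, 1)) (Sum.inr w) then (1 : ℝ) else 0)))
        = x (Sum.inl (u0, 0)) *
          (∑ u ∈ Finset.univ.filter (fun u => Quotient.mk (orbitSetoid G vc) u = c),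
            ((if Gt.Adj (Sum.inl (u, 0)) (Sum.inr w) then (1 : ℝ) else 0) -
             (if Gt.Adj (Sum.inl (u, 1)) (Sum.inr w) then (1 : ℝ) else 0))) := by
          rw [Finset.mul_sum]
          exact Finset.sum_congr rfl fun u hu => by rw [hconst u hu]
      _ = 0 := by
          rw [Finset.sum_sub_distrib]
          have hcard : ∀ i : Fin 2,
              (∑ u ∈ Finset.univ.filter (fun u => Quotient.mk (orbitSetoid G vc) u = c),
                (if Gt.Adj (Sum.inl (u, i)) (Sum.inr w) then (1 : ℝ) else 0)) =
              (Nat.card {v : V // SameOrbit G vc u0 v ∧ Gt.Adj (Sum.inl (v, i)) (Sum.inr w)}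
                : ℝ) := by
            intro i
            rw [Finset.sum_boole, Finset.filter_filter]
            rw [Nat.card_eq_fintype_card, Fintype.card_subtype]
            congr 2
            ext u
            simp [hmem u, and_comm]
          rw [hcard 0, hcard 1, hcount w u0, sub_self, mul_zero]
  · -- antisymmetry between the two layers
    intro v
    rw [key v 0, key v 1]
    rw [← Finset.sum_neg_distrib]
    refine Finset.sum_congr rfl fun u _ => ?_
    by_cases h : G.Adj v u <;> simp [h, hx1]
  · -- constancy on orbits
    intro u v huv
    obtain ⟨φ, hφc, hφu⟩ := huv
    rw [key u 0, key v 0]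
    rw [← Equiv.sum_comp φ.toEquiv
      (fun z => if G.Adj v z then x (Sum.inl (z, 0)) else 0)]
    refine Finset.sum_congr rfl fun z _ => ?_
    have hadj' : G.Adj v (φ.toEquiv z) ↔ G.Adj u z := by
      rw [← hφu]
      exact φ.map_adj_iff
    have hxz : x (Sum.inl ((φ.toEquiv z : V), 0)) = x (Sum.inl (z, 0)) :=
      (hx2 z (φ.toEquiv z) ⟨φ, hφc, rfl⟩).symm
    by_cases h : G.Adj u z
    · rw [if_pos (hadj'.mpr h), if_pos h, hxz]
    · rw [if_neg (fun hh => h (hadj'.mp hh)), if_neg h]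

end Aux

theorem construction1_zero_on_H {V W : Type*} [Fintype V] [Fintype W]
    [DecidableEq V] [DecidableEq W]
    (G : SimpleGraph V) (H : SimpleGraph W) (vc : V)
    (Gt : SimpleGraph (V × Fin 2 ⊕ W)) [DecidableRel Gt.Adj]
    (hC : IsConstruction1 G H vc Gt) (k : ℕ) (v' : W) :
    ((Gt.adjMatrix ℝ ^ k) *ᵥ
        (Pi.single (Sum.inl (vc, 0)) 1 - Pi.single (Sum.inl (vc, 1)) 1)) (Sum.inr v') = 0 := by
  set x0 : V × Fin 2 ⊕ W → ℝ :=
    Pi.single (Sum.inl (vc, 0)) 1 - Pi.single (Sum.inl (vc, 1)) 1 with hx0def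
  have hbase : Good G vc x0 := by
    have hvalr : ∀ w : W, x0 (Sum.inr w) = 0 := by
      intro w; simp [hx0def, Pi.single_apply]
    have hval : ∀ p : V × Fin 2,
        x0 (Sum.inl p) = (if p = (vc, 0) then (1 : ℝ) else 0) -
          (if p = (vc, 1) then (1 : ℝ) else 0) := by
      intro p; simp [hx0def, Pi.single_apply]
    refine ⟨hvalr, ?_, ?_⟩
    · intro v
      rw [hval, hval]
      by_cases h : v = vc <;> simp [h, Prod.ext_iff]
    · intro u v huv
      obtain ⟨φ, hφc, hφu⟩ := huv
      have hiff : u = vc ↔ v = vc := by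
        constructor
        · intro h; rw [← hφu, h, hφc]
        · intro h
          have : φ u = φ vc := by rw [hφu, h, hφc]
          exact φ.toEquiv.injective this
      rw [hval, hval]
      by_cases h : u = vc
      · have hv := hiff.mp h
        simp [h, hv, Prod.ext_iff]
      · have hv : ¬ v = vc := fun hv => h (hiff.mpr hv)
        simp [h, hv, Prod.ext_iff]
  have hall : ∀ k : ℕ, Good G vc ((Gt.adjMatrix ℝ ^ k) *ᵥ x0) := by
    intro k
    induction k with
    | zero => simpa using hbase
    | succ n ih =>
      rw [pow_succ', ← mulVec_mulVec]
      exact good_step hC ih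
  exact (hall k).1 v'
end

section
/- Let G̃ be obtained by Construction 1 from (G, H, v_c), let O be an orbit of Aut(G, v_c) acting on V(G), and let σ : O → O be a bijection. Let Ĝ be the graph on the same vertex set as G̃ whose edge set is the edge set of G̃ together with the edges {(v,1),(σ(v),2)} for all v ∈ O, and let Â be the adjacency matrix of Ĝ. Then, with v_c^1 = (v_c,1) and v_c^2 = (v_c,2), the subspaces span{Â^k(e_{v_c^1} + e_{v_c^2}) : k ≥ 0} and span{Â^k(e_{v_c^1} − e_{v_c^2}) : k ≥ 0} are orthogonal; that is, v_c^1 and v_c^2 remain A-cospectral in Ĝ. -/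
set_option linter.unusedSectionVars false


open SimpleGraph Matrix
open scoped Classical

/-- Vertices `u` and `v` are `A`-cospectral for the matrix `A`. -/
def ACospectral {α : Type*} [Fintype α] [DecidableEq α] (A : Matrix α α ℝ) (u v : α) : Prop :=
  ∀ x ∈ Submodule.span ℝ
      {z : α → ℝ | ∃ k : ℕ, z = (A ^ k) *ᵥ (Pi.single u 1 + Pi.single v 1)},
    ∀ y ∈ Submodule.span ℝ
      {z : α → ℝ | ∃ k : ℕ, z = (A ^ k) *ᵥ (Pi.single u 1 - Pi.single v 1)},
      x ⬝ᵥ y = 0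

section Aux
variable {V : Type*} [Fintype V] [DecidableEq V] (G : SimpleGraph V) (vc : V)

lemma so_refl (v : V) : SameOrbit G vc v v := ⟨RelIso.refl _, rfl, rfl⟩

lemma so_symm {v w : V} (h : SameOrbit G vc v w) : SameOrbit G vc w v := by
  obtain ⟨φ, h1, h2⟩ := h
  refine ⟨φ.symm, ?_, ?_⟩
  · conv_lhs => rw [← h1]
    exact RelIso.symm_apply_apply φ vc
  · conv_lhs => rw [← h2]
    exact RelIso.symm_apply_apply φ v

lemma so_trans {a b c : V} (h1 : SameOrbit G vc a b) (h2 : SameOrbit G vc b c) :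
    SameOrbit G vc a c := by
  obtain ⟨φ, hφ1, hφ2⟩ := h1; obtain ⟨ψ, hψ1, hψ2⟩ := h2
  exact ⟨φ.trans ψ, by simp [RelIso.trans_apply, hφ1, hψ1],
    by simp [RelIso.trans_apply, hφ2, hψ2]⟩

lemma so_congr {v w : V} (h : SameOrbit G vc v w) (x : V) :
    SameOrbit G vc v x ↔ SameOrbit G vc w x :=
  ⟨fun h' => so_trans G vc (so_symm G vc h) h', fun h' => so_trans G vc h h'⟩

noncomputable def nnR (v : V) : ℝ := ∑ x, if SameOrbit G vc v x then (1:ℝ) else 0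

noncomputable def pm (v w : V) : ℝ :=
  if SameOrbit G vc v w then (nnR G vc v)⁻¹ else 0

lemma nnR_congr {v w : V} (h : SameOrbit G vc v w) : nnR G vc v = nnR G vc w := by
  classical
  unfold nnR
  exact Finset.sum_congr rfl fun x _ => by simp [so_congr G vc h x]

lemma one_le_nnR (v : V) : 1 ≤ nnR G vc v := by
  classical
  unfold nnR
  have : ∀ x ∈ Finset.univ, (0:ℝ) ≤ if SameOrbit G vc v x then (1:ℝ) else 0 :=
    fun x _ => by positivity
  calc (1:ℝ) = if SameOrbit G vc v v then (1:ℝ) else 0 := by simp [so_refl]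
  _ ≤ _ := Finset.single_le_sum this (Finset.mem_univ v)

lemma nnR_ne_zero (v : V) : nnR G vc v ≠ 0 := by
  have := one_le_nnR G vc v; linarith

lemma pm_symm (v w : V) : pm G vc v w = pm G vc w v := by
  classical
  unfold pm
  by_cases h : SameOrbit G vc v w
  · rw [if_pos h, if_pos (so_symm G vc h), nnR_congr G vc h]
  · rw [if_neg h, if_neg (fun h' => h (so_symm G vc h'))]

end Aux

section Aux2
variable {V : Type*} [Fintype V] [DecidableEq V] (G : SimpleGraph V) (vc : V)

noncomputable def gA (v w : V) : ℝ := if G.Adj v w then 1 else 0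

omit [Fintype V] [DecidableEq V] in
lemma sum_ite_const_mul {ι : Type*} [Fintype ι] (P : ι → Prop) [DecidablePred P] (c : ℝ) (f : ι → ℝ) :
    ∑ x, (if P x then c else 0) * f x = c * ∑ x, (if P x then f x else 0) := by
  rw [Finset.mul_sum]
  exact Finset.sum_congr rfl fun x _ => by by_cases h : P x <;> simp [h]

omit [Fintype V] [DecidableEq V] in
lemma sum_mul_ite_const {ι : Type*} [Fintype ι] (P : ι → Prop) [DecidablePred P] (c : ℝ) (f : ι → ℝ) :
    ∑ x, f x * (if P x then c else 0) = c * ∑ x, (if P x then f x else 0) := by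
  rw [Finset.mul_sum]
  refine Finset.sum_congr rfl fun x _ => ?_
  by_cases h : P x <;> simp [h] <;> ring

omit [Fintype V] [DecidableEq V] in
lemma sum_ite_const' {ι : Type*} [Fintype ι] (P : ι → Prop) [DecidablePred P] (c : ℝ) :
    ∑ x, (if P x then c else 0) = (∑ x, if P x then (1:ℝ) else 0) * c := by
  rw [Finset.sum_mul]
  refine Finset.sum_congr rfl fun x _ => ?_
  by_cases h : P x <;> simp [h]

omit [Fintype V] [DecidableEq V] in
lemma ite_sum_push {ι : Type*} [Fintype ι] (c : Prop) [Decidable c] (f : ι → ℝ) :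
    (if c then ∑ x, f x else 0) = ∑ x, if c then f x else 0 := by
  by_cases h : c <;> simp [h]

lemma gA_symm (v w : V) : gA G v w = gA G w v := by
  classical
  unfold gA
  simp [G.adj_comm]

lemma gA_iso (φ : G ≃g G) (v w : V) : gA G (φ v) (φ w) = gA G v w := by
  classical
  unfold gA
  simp [φ.map_adj_iff]


/-- sums of `gA` over an orbit are constant along the other orbit -/
lemma orbsum_adj_const {w w' : V} (h : SameOrbit G vc w w') (v : V) :
    (∑ x, if SameOrbit G vc v x then gA G x w else 0) =
    ∑ x, (if SameOrbit G vc v x then gA G x w' else 0) := by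
  classical
  obtain ⟨φ, hvc, hw⟩ := h
  have step1 : ∀ x, (if SameOrbit G vc v x then gA G x w else 0) =
      (if SameOrbit G vc v (φ x) then gA G (φ x) w' else 0) := by
    intro x
    by_cases hc : SameOrbit G vc v x
    · rw [if_pos hc, if_pos (so_trans G vc hc ⟨φ, hvc, rfl⟩), ← hw, gA_iso]
    · rw [if_neg hc, if_neg (fun h' => hc (so_trans G vc h' (so_symm G vc ⟨φ, hvc, rfl⟩)))]
  calc (∑ x, if SameOrbit G vc v x then gA G x w else 0)
      = ∑ x, (if SameOrbit G vc v (φ x) then gA G (φ x) w' else 0) :=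
        Finset.sum_congr rfl fun x _ => step1 x
    _ = ∑ x, (if SameOrbit G vc v x then gA G x w' else 0) :=
        Equiv.sum_comp φ.toEquiv (fun y => if SameOrbit G vc v y then gA G y w' else 0)

lemma orbsum_exchange (v w : V) :
    nnR G vc w * (∑ x, if SameOrbit G vc v x then gA G x w else 0) =
    nnR G vc v * (∑ y, if SameOrbit G vc w y then gA G y v else 0) := by
  classical
  have lhs_eq : (∑ y, if SameOrbit G vc w y then
        (∑ x, if SameOrbit G vc v x then gA G x w else 0) else 0) =
      nnR G vc w * (∑ x, if SameOrbit G vc v x then gA G x w else 0) := by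
    rw [sum_ite_const' (SameOrbit G vc w)]
    unfold nnR
    ring
  rw [← lhs_eq]
  have swap1 : (∑ y, if SameOrbit G vc w y then
        (∑ x, if SameOrbit G vc v x then gA G x w else 0) else 0) =
      ∑ y, (if SameOrbit G vc w y then
        (∑ x, if SameOrbit G vc v x then gA G x y else 0) else 0) := by
    refine Finset.sum_congr rfl fun y _ => ?_
    by_cases h : SameOrbit G vc w y
    · rw [if_pos h, if_pos h, orbsum_adj_const G vc h]
    · rw [if_neg h, if_neg h]
  rw [swap1]
  have swap2 : ∀ y, (if SameOrbit G vc w y then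
        (∑ x, if SameOrbit G vc v x then gA G x y else 0) else 0) =
      ∑ x, (if SameOrbit G vc v x then (if SameOrbit G vc w y then gA G x y else 0) else 0) := by
    intro y
    rw [ite_sum_push]
    refine Finset.sum_congr rfl fun x _ => ?_
    by_cases h1 : SameOrbit G vc w y <;> by_cases h2 : SameOrbit G vc v x <;> simp [h1, h2]
  calc ∑ y, (if SameOrbit G vc w y then
        (∑ x, if SameOrbit G vc v x then gA G x y else 0) else 0)
      = ∑ y, ∑ x, (if SameOrbit G vc v x then
          (if SameOrbit G vc w y then gA G x y else 0) else 0) :=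
        Finset.sum_congr rfl fun y _ => swap2 y
    _ = ∑ x, ∑ y, (if SameOrbit G vc v x then
          (if SameOrbit G vc w y then gA G x y else 0) else 0) := Finset.sum_comm
    _ = ∑ x, (if SameOrbit G vc v x then
          (∑ y, if SameOrbit G vc w y then gA G x y else 0) else 0) := by
        refine Finset.sum_congr rfl fun x _ => ?_
        rw [ite_sum_push]
    _ = ∑ x, (if SameOrbit G vc v x then
          (∑ y, if SameOrbit G vc w y then gA G y v else 0) else 0) := by
        refine Finset.sum_congr rfl fun x _ => ?_
        by_cases hx : SameOrbit G vc v x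
        · rw [if_pos hx, if_pos hx]
          calc (∑ y, if SameOrbit G vc w y then gA G x y else 0)
              = ∑ y, (if SameOrbit G vc w y then gA G y x else 0) :=
                Finset.sum_congr rfl fun y _ => by
                  by_cases h : SameOrbit G vc w y <;> simp [h, gA_symm]
            _ = ∑ y, (if SameOrbit G vc w y then gA G y v else 0) :=
                orbsum_adj_const G vc (so_symm G vc hx) w
        · rw [if_neg hx, if_neg hx]
    _ = nnR G vc v * (∑ y, if SameOrbit G vc w y then gA G y v else 0) := by
        rw [sum_ite_const' (SameOrbit G vc v)]
        unfold nnR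
        ring

/-- `P * A = A * P` entrywise -/
lemma pa_comm (v w : V) :
    ∑ x, pm G vc v x * gA G x w = ∑ x, gA G v x * pm G vc x w := by
  classical
  have hL : ∑ x, pm G vc v x * gA G x w =
      (nnR G vc v)⁻¹ * ∑ x, (if SameOrbit G vc v x then gA G x w else 0) := by
    rw [← sum_ite_const_mul]
    exact Finset.sum_congr rfl fun x _ => by
      unfold pm
      by_cases h : SameOrbit G vc v x <;> simp [h]
  have hR : ∑ x, gA G v x * pm G vc x w =
      (nnR G vc w)⁻¹ * ∑ x, (if SameOrbit G vc w x then gA G x v else 0) := by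
    rw [← sum_ite_const_mul (SameOrbit G vc w) ((nnR G vc w)⁻¹) (fun x => gA G x v)]
    refine Finset.sum_congr rfl fun x _ => ?_
    unfold pm
    by_cases h : SameOrbit G vc x w
    · rw [if_pos h, if_pos (so_symm G vc h), nnR_congr G vc h, gA_symm, mul_comm]
    · rw [if_neg h, if_neg (fun h' => h (so_symm G vc h')), mul_zero, zero_mul]
  rw [hL, hR]
  have h1 := orbsum_exchange G vc v w
  have hv := nnR_ne_zero G vc v
  have hw := nnR_ne_zero G vc w
  field_simp
  linarith [h1]

end Aux2

section Aux3
variable {V : Type*} [Fintype V] [DecidableEq V] (G : SimpleGraph V) (vc : V)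

lemma so_vc_iff (w : V) : SameOrbit G vc vc w ↔ w = vc := by
  constructor
  · rintro ⟨φ, h1, h2⟩; rw [← h2, h1]
  · rintro rfl; exact so_refl _ _ _

lemma nnR_vc : nnR G vc vc = 1 := by
  unfold nnR
  have : ∀ x, (if SameOrbit G vc vc x then (1:ℝ) else 0) = if x = vc then (1:ℝ) else 0 := by
    intro x
    by_cases h : x = vc
    · rw [if_pos ((so_vc_iff G vc x).mpr h), if_pos h]
    · rw [if_neg (fun h' => h ((so_vc_iff G vc x).mp h')), if_neg h]
  rw [Finset.sum_congr rfl fun x _ => this x]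
  simp

lemma pm_vc_left (w : V) : pm G vc vc w = if w = vc then 1 else 0 := by
  unfold pm
  by_cases h : w = vc
  · subst h; rw [if_pos (so_refl _ _ _), if_pos rfl, nnR_vc, inv_one]
  · rw [if_neg (fun h' => h ((so_vc_iff G vc w).mp h')), if_neg h]

variable (u : V) (σ : V → V)
  (hσ : Set.BijOn σ {v | SameOrbit G vc u v} {v | SameOrbit G vc u v})

noncomputable def bm (v w : V) : ℝ := if SameOrbit G vc u v ∧ w = σ v then 1 else 0

noncomputable def qm (v w : V) : ℝ :=
  if SameOrbit G vc u v ∧ SameOrbit G vc u w then (nnR G vc u)⁻¹ else 0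

include hσ in
lemma sigma_mem {v : V} (hv : SameOrbit G vc u v) : SameOrbit G vc u (σ v) := hσ.mapsTo hv

include hσ in
lemma sigma_pre {w : V} (hw : SameOrbit G vc u w) :
    ∃ x, (SameOrbit G vc u x ∧ σ x = w) ∧ ∀ y, SameOrbit G vc u y → σ y = w → y = x := by
  obtain ⟨x, hx, hxw⟩ := hσ.surjOn hw
  exact ⟨x, ⟨hx, hxw⟩, fun y hy hyw => hσ.injOn hy hx (by rw [hyw, hxw])⟩

include hσ in
lemma s2i (v w : V) : ∑ x, pm G vc v x * bm G vc u σ x w = qm G vc u v w := by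
  by_cases hv : SameOrbit G vc u v
  · have step : ∀ x, pm G vc v x * bm G vc u σ x w =
        if SameOrbit G vc u x ∧ w = σ x then (nnR G vc u)⁻¹ else 0 := by
      intro x
      unfold pm bm
      by_cases hx : SameOrbit G vc u x
      · rw [if_pos (so_trans G vc (so_symm G vc hv) hx), ← nnR_congr G vc hv]
        by_cases hwx : w = σ x
        · rw [if_pos (show SameOrbit G vc u x ∧ w = σ x from ⟨hx, hwx⟩),
            if_pos (show SameOrbit G vc u x ∧ w = σ x from ⟨hx, hwx⟩), mul_one]
        · rw [if_neg (show ¬(SameOrbit G vc u x ∧ w = σ x) from fun h => hwx h.2),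
            if_neg (show ¬(SameOrbit G vc u x ∧ w = σ x) from fun h => hwx h.2), mul_zero]
      · rw [if_neg (show ¬ SameOrbit G vc v x from fun h => hx (so_trans G vc hv h)),
          zero_mul, if_neg (show ¬(SameOrbit G vc u x ∧ w = σ x) from fun h => hx h.1)]
    rw [Finset.sum_congr rfl fun x _ => step x]
    unfold qm
    by_cases hw : SameOrbit G vc u w
    · obtain ⟨x₀, ⟨hx₀, hx₀w⟩, huniq⟩ := sigma_pre G vc u σ hσ hw
      rw [Finset.sum_eq_single x₀, if_pos (show _ ∧ _ from ⟨hx₀, hx₀w.symm⟩),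
        if_pos (show _ ∧ _ from ⟨hv, hw⟩)]
      · intro y _ hy
        exact if_neg fun h => hy (huniq y h.1 h.2.symm)
      · intro h; exact absurd (Finset.mem_univ x₀) h
    · rw [Finset.sum_eq_zero fun x _ =>
          if_neg (show ¬(SameOrbit G vc u x ∧ w = σ x) from
            fun h => hw (h.2 ▸ sigma_mem G vc u σ hσ h.1)),
        if_neg (show ¬(_ ∧ _) from fun h => hw h.2)]
  · rw [Finset.sum_eq_zero, eq_comm]
    · unfold qm; rw [if_neg (show ¬(_ ∧ _) from fun h => hv h.1)]
    · intro x _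
      unfold pm
      by_cases hx : SameOrbit G vc v x
      · rw [if_pos hx]
        unfold bm
        rw [if_neg (show ¬(SameOrbit G vc u x ∧ w = σ x) from
          fun h => hv (so_trans G vc h.1 (so_symm G vc hx))), mul_zero]
      · rw [if_neg hx, zero_mul]

include hσ in
lemma s2ii (v w : V) : ∑ x, bm G vc u σ v x * pm G vc x w = qm G vc u v w := by
  by_cases hv : SameOrbit G vc u v
  · rw [Finset.sum_eq_single (σ v)]
    · unfold bm
      rw [if_pos (show SameOrbit G vc u v ∧ σ v = σ v from ⟨hv, rfl⟩), one_mul]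
      have hσv := sigma_mem G vc u σ hσ hv
      unfold pm qm
      by_cases hw : SameOrbit G vc u w
      · rw [if_pos (so_trans G vc (so_symm G vc hσv) hw),
          if_pos (show _ ∧ _ from ⟨hv, hw⟩), ← nnR_congr G vc hσv]
      · rw [if_neg (show ¬ SameOrbit G vc (σ v) w from fun h => hw (so_trans G vc hσv h)),
          if_neg (show ¬(_ ∧ _) from fun h => hw h.2)]
    · intro y _ hy
      unfold bm
      rw [if_neg (show ¬(SameOrbit G vc u v ∧ y = σ v) from fun h => hy h.2), zero_mul]
    · intro h; exact absurd (Finset.mem_univ _) h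
  · rw [Finset.sum_eq_zero fun x _ => by
      unfold bm
      rw [if_neg (show ¬(SameOrbit G vc u v ∧ x = σ v) from fun h => hv h.1), zero_mul]]
    unfold qm
    rw [if_neg (show ¬(_ ∧ _) from fun h => hv h.1)]

include hσ in
lemma s2iii (v w : V) : ∑ x, pm G vc v x * bm G vc u σ w x = qm G vc u v w := by
  by_cases hw : SameOrbit G vc u w
  · rw [Finset.sum_eq_single (σ w)]
    · unfold bm
      rw [if_pos (show SameOrbit G vc u w ∧ σ w = σ w from ⟨hw, rfl⟩), mul_one]
      have hσw := sigma_mem G vc u σ hσ hw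
      unfold pm qm
      by_cases hv : SameOrbit G vc u v
      · rw [if_pos (so_trans G vc (so_symm G vc hv) hσw),
          if_pos (show _ ∧ _ from ⟨hv, hw⟩), ← nnR_congr G vc hv]
      · rw [if_neg (show ¬ SameOrbit G vc v (σ w) from
            fun h => hv (so_trans G vc hσw (so_symm G vc h))),
          if_neg (show ¬(_ ∧ _) from fun h => hv h.1)]
    · intro y _ hy
      unfold bm
      rw [if_neg (show ¬(SameOrbit G vc u w ∧ y = σ w) from fun h => hy h.2), mul_zero]
    · intro h; exact absurd (Finset.mem_univ _) h
  · rw [Finset.sum_eq_zero fun x _ => by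
      unfold bm
      rw [if_neg (show ¬(SameOrbit G vc u w ∧ x = σ w) from fun h => hw h.1), mul_zero]]
    unfold qm
    rw [if_neg (show ¬(_ ∧ _) from fun h => hw h.2)]

include hσ in
lemma s2iv (v w : V) : ∑ x, bm G vc u σ x v * pm G vc x w = qm G vc u v w := by
  by_cases hv : SameOrbit G vc u v
  · obtain ⟨x₀, ⟨hx₀, hx₀v⟩, huniq⟩ := sigma_pre G vc u σ hσ hv
    rw [Finset.sum_eq_single x₀]
    · unfold bm
      rw [if_pos (show SameOrbit G vc u x₀ ∧ v = σ x₀ from ⟨hx₀, hx₀v.symm⟩), one_mul]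
      unfold pm qm
      by_cases hw : SameOrbit G vc u w
      · rw [if_pos (so_trans G vc (so_symm G vc hx₀) hw),
          if_pos (show _ ∧ _ from ⟨hv, hw⟩), ← nnR_congr G vc hx₀]
      · rw [if_neg (show ¬ SameOrbit G vc x₀ w from fun h => hw (so_trans G vc hx₀ h)),
          if_neg (show ¬(_ ∧ _) from fun h => hw h.2)]
    · intro y _ hy
      unfold bm
      rw [if_neg (show ¬(SameOrbit G vc u y ∧ v = σ y) from
        fun h => hy (huniq y h.1 h.2.symm)), zero_mul]
    · intro h; exact absurd (Finset.mem_univ _) h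
  · rw [Finset.sum_eq_zero fun x _ => by
      unfold bm
      rw [if_neg (show ¬(SameOrbit G vc u x ∧ v = σ x) from
        fun h => hv (h.2 ▸ sigma_mem G vc u σ hσ h.1)), zero_mul]]
    unfold qm
    rw [if_neg (show ¬(_ ∧ _) from fun h => hv h.1)]

end Aux3

section Aux4
variable {V W : Type*} [Fintype V] [DecidableEq V] [Fintype W] [DecidableEq W]
variable (G : SimpleGraph V) (vc : V) (Gt : SimpleGraph (V × Fin 2 ⊕ W))

noncomputable def cm (i : Fin 2) (v : V) (w : W) : ℝ :=
  if Gt.Adj (Sum.inl (v, i)) (Sum.inr w) then 1 else 0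

lemma s3 (h4 : ∀ w : W, ∀ u : V,
      Nat.card {v : V // SameOrbit G vc u v ∧ Gt.Adj (Sum.inl (v, 0)) (Sum.inr w)} =
      Nat.card {v : V // SameOrbit G vc u v ∧ Gt.Adj (Sum.inl (v, 1)) (Sum.inr w)})
    (v : V) (w : W) :
    ∑ x, pm G vc v x * cm Gt 0 x w = ∑ x, pm G vc v x * cm Gt 1 x w := by
  have gen : ∀ i : Fin 2, ∑ x, pm G vc v x * cm Gt i x w = (nnR G vc v)⁻¹ *
      (Nat.card {x : V // SameOrbit G vc v x ∧ Gt.Adj (Sum.inl (x, i)) (Sum.inr w)} : ℝ) := by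
    intro i
    have step : ∀ x, pm G vc v x * cm Gt i x w =
        if SameOrbit G vc v x ∧ Gt.Adj (Sum.inl (x, i)) (Sum.inr w)
          then (nnR G vc v)⁻¹ else 0 := by
      intro x
      unfold pm cm
      by_cases h1 : SameOrbit G vc v x <;> by_cases h2 : Gt.Adj (Sum.inl (x, i)) (Sum.inr w) <;>
        simp [h1, h2]
    rw [Finset.sum_congr rfl fun x _ => step x, sum_ite_const', Finset.sum_boole,
      Nat.card_eq_fintype_card, Fintype.card_subtype, mul_comm]
  rw [gen 0, gen 1, h4 w v]

end Aux4

section Aux5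
variable {V W : Type*} [Fintype V] [DecidableEq V] [Fintype W] [DecidableEq W]
variable (G : SimpleGraph V) (vc : V)

noncomputable def Qm (G : SimpleGraph V) (vc : V) :
    Matrix (V × Fin 2 ⊕ W) (V × Fin 2 ⊕ W) ℝ := fun a b =>
  match a, b with
  | Sum.inl (v, i), Sum.inl (w, j) =>
      if i = j then (if v = w then 1 else 0) - pm G vc v w else pm G vc v w
  | Sum.inr y, Sum.inr y' => if y = y' then 1 else 0
  | _, _ => 0

lemma Qm00 (v w : V) : Qm (W := W) G vc (Sum.inl (v, 0)) (Sum.inl (w, 0)) =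
    (if v = w then 1 else 0) - pm G vc v w := by
  show (if (0 : Fin 2) = 0 then (if v = w then (1:ℝ) else 0) - pm G vc v w
    else pm G vc v w) = _
  rw [if_pos rfl]

lemma Qm11 (v w : V) : Qm (W := W) G vc (Sum.inl (v, 1)) (Sum.inl (w, 1)) =
    (if v = w then 1 else 0) - pm G vc v w := by
  show (if (1 : Fin 2) = 1 then (if v = w then (1:ℝ) else 0) - pm G vc v w
    else pm G vc v w) = _
  rw [if_pos rfl]

lemma Qm01 (v w : V) : Qm (W := W) G vc (Sum.inl (v, 0)) (Sum.inl (w, 1)) =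
    pm G vc v w := by
  show (if (0 : Fin 2) = 1 then (if v = w then (1:ℝ) else 0) - pm G vc v w
    else pm G vc v w) = _
  rw [if_neg (by decide : ¬ (0 : Fin 2) = 1)]

lemma Qm10 (v w : V) : Qm (W := W) G vc (Sum.inl (v, 1)) (Sum.inl (w, 0)) =
    pm G vc v w := by
  show (if (1 : Fin 2) = 0 then (if v = w then (1:ℝ) else 0) - pm G vc v w
    else pm G vc v w) = _
  rw [if_neg (by decide : ¬ (1 : Fin 2) = 0)]

lemma Qmlr (v : V) (i : Fin 2) (y : W) :
    Qm G vc (Sum.inl (v, i)) (Sum.inr y) = 0 := rfl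

lemma Qmrl (v : V) (i : Fin 2) (y : W) :
    Qm G vc (Sum.inr y) (Sum.inl (v, i)) = 0 := rfl

lemma Qmrr (y y' : W) : Qm (V := V) G vc (Sum.inr y) (Sum.inr y') =
    if y = y' then 1 else 0 := rfl

lemma sum_split (f : V × Fin 2 ⊕ W → ℝ) :
    ∑ c, f c = (∑ x, f (Sum.inl (x, 0))) + (∑ x, f (Sum.inl (x, 1))) + ∑ y, f (Sum.inr y) := by
  rw [Fintype.sum_sum_type, Fintype.sum_prod_type]
  congr 1
  calc ∑ x, ∑ i : Fin 2, f (Sum.inl (x, i))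
      = ∑ x, (f (Sum.inl (x, 0)) + f (Sum.inl (x, 1))) :=
        Finset.sum_congr rfl fun x _ => Fin.sum_univ_two _
    _ = _ := Finset.sum_add_distrib

lemma sum_delta_mul (v : V) (f : V → ℝ) :
    ∑ x, (if v = x then (1:ℝ) else 0) * f x = f v := by
  simp [ite_mul]

lemma sum_mul_delta (v : V) (f : V → ℝ) :
    ∑ x, f x * (if x = v then (1:ℝ) else 0) = f v := by
  simp [mul_ite]

lemma sum_delta_mul' (y : W) (f : W → ℝ) :
    ∑ x, (if y = x then (1:ℝ) else 0) * f x = f y := by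
  simp [ite_mul]

lemma sum_mul_delta' (y : W) (f : W → ℝ) :
    ∑ x, f x * (if x = y then (1:ℝ) else 0) = f y := by
  simp [mul_ite]

end Aux5

section Aux6
variable {V W : Type*} [Fintype V] [DecidableEq V] [Fintype W] [DecidableEq W]
variable (G : SimpleGraph V) (vc u : V) (σ : V → V) (Gt : SimpleGraph (V × Fin 2 ⊕ W))

lemma qa_comm
    (hσ : Set.BijOn σ {v | SameOrbit G vc u v} {v | SameOrbit G vc u v})
    (h4 : ∀ w : W, ∀ u' : V,
      Nat.card {v : V // SameOrbit G vc u' v ∧ Gt.Adj (Sum.inl (v, 0)) (Sum.inr w)} =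
      Nat.card {v : V // SameOrbit G vc u' v ∧ Gt.Adj (Sum.inl (v, 1)) (Sum.inr w)})
    (A : Matrix (V × Fin 2 ⊕ W) (V × Fin 2 ⊕ W) ℝ)
    (hA00 : ∀ v w, A (Sum.inl (v, 0)) (Sum.inl (w, 0)) = gA G v w)
    (hA11 : ∀ v w, A (Sum.inl (v, 1)) (Sum.inl (w, 1)) = gA G v w)
    (hA01 : ∀ v w, A (Sum.inl (v, 0)) (Sum.inl (w, 1)) = bm G vc u σ v w)
    (hA10 : ∀ v w, A (Sum.inl (v, 1)) (Sum.inl (w, 0)) = bm G vc u σ w v)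
    (hAlr : ∀ (i : Fin 2) v y, A (Sum.inl (v, i)) (Sum.inr y) = cm Gt i v y)
    (hArl : ∀ (i : Fin 2) v y, A (Sum.inr y) (Sum.inl (v, i)) = cm Gt i v y) :
    Qm G vc * A = A * Qm G vc := by
  ext a b
  rw [Matrix.mul_apply, Matrix.mul_apply, sum_split, sum_split]
  rcases a with ⟨v, i⟩ | y <;> rcases b with ⟨w, j⟩ | y'
  · fin_cases i <;> fin_cases j
    · -- (v,0), (w,0)
      simp only [Fin.mk_zero, Fin.mk_one, Qm00, Qm01, Qm10, Qm11, Qmlr, Qmrl, hA00, hA01, hA10, hA11,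
        zero_mul, mul_zero, Finset.sum_const_zero, add_zero]
      simp only [sub_mul, mul_sub, Finset.sum_sub_distrib, sum_delta_mul, sum_mul_delta]
      have e1 := s2iii G vc u σ hσ v w
      have e2 := s2ii G vc u σ hσ v w
      have e3 := pa_comm G vc v w
      linarith
    · -- (v,0), (w,1)
      simp only [Fin.mk_zero, Fin.mk_one, Qm00, Qm01, Qm10, Qm11, Qmlr, Qmrl, hA00, hA01, hA10, hA11,
        zero_mul, mul_zero, Finset.sum_const_zero, add_zero]
      simp only [sub_mul, mul_sub, Finset.sum_sub_distrib, sum_delta_mul, sum_mul_delta]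
      have e1 := s2i G vc u σ hσ v w
      have e2 := s2ii G vc u σ hσ v w
      have e3 := pa_comm G vc v w
      linarith
    · -- (v,1), (w,0)
      simp only [Fin.mk_zero, Fin.mk_one, Qm00, Qm01, Qm10, Qm11, Qmlr, Qmrl, hA00, hA01, hA10, hA11,
        zero_mul, mul_zero, Finset.sum_const_zero, add_zero]
      simp only [sub_mul, mul_sub, Finset.sum_sub_distrib, sum_delta_mul, sum_mul_delta]
      have e1 := s2iii G vc u σ hσ v w
      have e2 := s2iv G vc u σ hσ v w
      have e3 := pa_comm G vc v w
      linarith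
    · -- (v,1), (w,1)
      simp only [Fin.mk_zero, Fin.mk_one, Qm00, Qm01, Qm10, Qm11, Qmlr, Qmrl, hA00, hA01, hA10, hA11,
        zero_mul, mul_zero, Finset.sum_const_zero, add_zero]
      simp only [sub_mul, mul_sub, Finset.sum_sub_distrib, sum_delta_mul, sum_mul_delta]
      have e1 := s2i G vc u σ hσ v w
      have e2 := s2iv G vc u σ hσ v w
      have e3 := pa_comm G vc v w
      linarith
  · fin_cases i
    · -- (v,0), inr y'
      simp only [Fin.mk_zero, Fin.mk_one, Qm00, Qm01, Qm10, Qm11, Qmlr, Qmrl, Qmrr, hA00, hA01, hAlr,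
        zero_mul, mul_zero, Finset.sum_const_zero, add_zero, zero_add]
      simp only [sub_mul, Finset.sum_sub_distrib, sum_delta_mul, sum_mul_delta']
      have e1 := s3 G vc Gt h4 v y'
      linarith
    · -- (v,1), inr y'
      simp only [Fin.mk_zero, Fin.mk_one, Qm00, Qm01, Qm10, Qm11, Qmlr, Qmrl, Qmrr, hA00, hA11, hA10, hAlr,
        zero_mul, mul_zero, Finset.sum_const_zero, add_zero, zero_add]
      simp only [sub_mul, Finset.sum_sub_distrib, sum_delta_mul, sum_mul_delta']
      have e1 := s3 G vc Gt h4 v y'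
      linarith
  · fin_cases j
    · -- inr y, (w,0)
      simp only [Fin.mk_zero, Fin.mk_one, Qm00, Qm01, Qm10, Qm11, Qmlr, Qmrl, Qmrr, hArl,
        zero_mul, mul_zero, Finset.sum_const_zero, add_zero, zero_add]
      simp only [mul_sub, Finset.sum_sub_distrib, sum_mul_delta, sum_delta_mul']
      have e1 := s3 G vc Gt h4 w y
      have e2 : ∑ x, cm Gt 0 x y * pm G vc x w = ∑ x, pm G vc w x * cm Gt 0 x y :=
        Finset.sum_congr rfl fun x _ => by rw [pm_symm G vc x w, mul_comm]
      have e3 : ∑ x, cm Gt 1 x y * pm G vc x w = ∑ x, pm G vc w x * cm Gt 1 x y :=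
        Finset.sum_congr rfl fun x _ => by rw [pm_symm G vc x w, mul_comm]
      linarith
    · -- inr y, (w,1)
      simp only [Fin.mk_zero, Fin.mk_one, Qm00, Qm01, Qm10, Qm11, Qmlr, Qmrl, Qmrr, hArl,
        zero_mul, mul_zero, Finset.sum_const_zero, add_zero, zero_add]
      simp only [mul_sub, Finset.sum_sub_distrib, sum_mul_delta, sum_delta_mul']
      have e1 := s3 G vc Gt h4 w y
      have e2 : ∑ x, cm Gt 0 x y * pm G vc x w = ∑ x, pm G vc w x * cm Gt 0 x y :=
        Finset.sum_congr rfl fun x _ => by rw [pm_symm G vc x w, mul_comm]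
      have e3 : ∑ x, cm Gt 1 x y * pm G vc x w = ∑ x, pm G vc w x * cm Gt 1 x y :=
        Finset.sum_congr rfl fun x _ => by rw [pm_symm G vc x w, mul_comm]
      linarith
  · -- inr y, inr y'
    simp only [Fin.mk_zero, Fin.mk_one, Qmlr, Qmrl, Qmrr, zero_mul, mul_zero, Finset.sum_const_zero,
      add_zero, zero_add]
    rw [sum_delta_mul' y (fun y'' => A (Sum.inr y'') (Sum.inr y')),
      sum_mul_delta' y' (fun y'' => A (Sum.inr y) (Sum.inr y''))]

end Aux6

section Aux7
variable {V W : Type*} [Fintype V] [DecidableEq V] [Fintype W] [DecidableEq W]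
variable (G : SimpleGraph V) (vc : V)

lemma qm_symm_apply (a b : V × Fin 2 ⊕ W) : Qm G vc a b = Qm G vc b a := by
  rcases a with ⟨v, i⟩ | y <;> rcases b with ⟨w, j⟩ | y'
  · show (if i = j then (if v = w then (1:ℝ) else 0) - pm G vc v w else pm G vc v w)
        = (if j = i then (if w = v then (1:ℝ) else 0) - pm G vc w v else pm G vc w v)
    rw [pm_symm G vc v w]
    by_cases h : i = j
    · rw [if_pos h, if_pos h.symm]
      congr 1
      by_cases hv : v = w
      · rw [if_pos hv, if_pos hv.symm]
      · rw [if_neg hv, if_neg fun h' => hv h'.symm]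
    · rw [if_neg h, if_neg fun h' => h h'.symm]
  · rfl
  · rfl
  · show (if y = y' then (1:ℝ) else 0) = (if y' = y then (1:ℝ) else 0)
    by_cases h : y = y'
    · rw [if_pos h, if_pos h.symm]
    · rw [if_neg h, if_neg fun h' => h h'.symm]

lemma qm_transpose : (Qm (W := W) G vc)ᵀ = Qm G vc := by
  ext a b
  rw [Matrix.transpose_apply, qm_symm_apply]

lemma qm_col0 (a : V × Fin 2 ⊕ W) :
    Qm G vc a (Sum.inl (vc, 0)) =
      (Pi.single (Sum.inl (vc, 1)) 1 : V × Fin 2 ⊕ W → ℝ) a := by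
  rcases a with ⟨w, j⟩ | y
  · fin_cases j <;> simp only [Fin.mk_zero, Fin.mk_one]
    · rw [Qm00, Pi.single_apply,
        if_neg (show (Sum.inl (w, 0) : V × Fin 2 ⊕ W) ≠ Sum.inl (vc, 1) from
          fun h => (show ((0:Fin 2) ≠ 1) by decide) (congrArg Prod.snd (Sum.inl.inj h))),
        pm_symm G vc w vc, pm_vc_left G vc w, sub_self]
    · rw [Qm10, Pi.single_apply, pm_symm G vc w vc, pm_vc_left G vc w]
      by_cases h : w = vc
      · rw [if_pos h, if_pos (by rw [h])]
      · rw [if_neg h, if_neg (fun h' => h (congrArg Prod.fst (Sum.inl.inj h')))]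
  · rw [Qmrl, Pi.single_apply, if_neg (fun h => Sum.inr_ne_inl h)]

lemma qm_col1 (a : V × Fin 2 ⊕ W) :
    Qm G vc a (Sum.inl (vc, 1)) =
      (Pi.single (Sum.inl (vc, 0)) 1 : V × Fin 2 ⊕ W → ℝ) a := by
  rcases a with ⟨w, j⟩ | y
  · fin_cases j <;> simp only [Fin.mk_zero, Fin.mk_one]
    · rw [Qm01, Pi.single_apply, pm_symm G vc w vc, pm_vc_left G vc w]
      by_cases h : w = vc
      · rw [if_pos h, if_pos (by rw [h])]
      · rw [if_neg h, if_neg (fun h' => h (congrArg Prod.fst (Sum.inl.inj h')))]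
    · rw [Qm11, Pi.single_apply,
        if_neg (show (Sum.inl (w, 1) : V × Fin 2 ⊕ W) ≠ Sum.inl (vc, 0) from
          fun h => (show ((1:Fin 2) ≠ 0) by decide) (congrArg Prod.snd (Sum.inl.inj h))),
        pm_symm G vc w vc, pm_vc_left G vc w, sub_self]
  · rw [Qmrl, Pi.single_apply, if_neg (fun h => Sum.inr_ne_inl h)]

end Aux7

/-- Connecting the two copies of one orbit of `Aut(G, vc)` by a bijection (Construction 2)
preserves `A`-cospectrality of the two copies of the fixed vertex. -/
theorem construction2_preserves_ACospectral {V W : Type*} [Fintype V] [Fintype W]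
    [DecidableEq V] [DecidableEq W]
    (G : SimpleGraph V) (H : SimpleGraph W) (vc : V)
    (Gt : SimpleGraph (V × Fin 2 ⊕ W))
    (hC : IsConstruction1 G H vc Gt)
    -- `O` is an orbit of `Aut(G, vc)` acting on `V(G)`, given by a representative `u`
    (u : V) (O : Set V) (hO : O = {v : V | SameOrbit G vc u v})
    -- `σ` is a bijection of `O` onto itself
    (σ : V → V) (hσ : Set.BijOn σ O O)
    -- `Ghat` is `Gt` together with the edges `{(v,1), (σ v, 2)}` for `v ∈ O`
    (Ghat : SimpleGraph (V × Fin 2 ⊕ W)) [DecidableRel Ghat.Adj]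
    (hGhat : ∀ a b : V × Fin 2 ⊕ W, Ghat.Adj a b ↔ Gt.Adj a b ∨
      (∃ v ∈ O, (a = Sum.inl (v, 0) ∧ b = Sum.inl (σ v, 1)) ∨
        (b = Sum.inl (v, 0) ∧ a = Sum.inl (σ v, 1)))) :
    ACospectral (Ghat.adjMatrix ℝ) (Sum.inl (vc, 0)) (Sum.inl (vc, 1)) := by
  classical
  obtain ⟨hC1, hC2, hC3, hC4⟩ := hC
  subst hO
  set A := Ghat.adjMatrix ℝ with hAdef
  have hAsym : ∀ a b, A a b = A b a := by
    intro a b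
    simp only [hAdef, SimpleGraph.adjMatrix_apply]
    by_cases h : Ghat.Adj a b
    · rw [if_pos h, if_pos h.symm]
    · rw [if_neg h, if_neg fun h' => h h'.symm]
  have hA00 : ∀ v w, A (Sum.inl (v, 0)) (Sum.inl (w, 0)) = gA G v w := by
    intro v w
    have hiff : Ghat.Adj (Sum.inl (v, 0)) (Sum.inl (w, 0)) ↔ G.Adj v w := by
      rw [hGhat]
      constructor
      · rintro (h | ⟨x, hx, ⟨h1, h2⟩ | ⟨h1, h2⟩⟩)
        · exact (hC1 0 v w).mp h
        · exact absurd (congrArg Prod.snd (Sum.inl.inj h2)) (show ((0:Fin 2) ≠ 1) by decide)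
        · exact absurd (congrArg Prod.snd (Sum.inl.inj h2)) (show ((0:Fin 2) ≠ 1) by decide)
      · intro h; exact Or.inl ((hC1 0 v w).mpr h)
    simp only [hAdef, SimpleGraph.adjMatrix_apply]
    unfold gA
    by_cases h : G.Adj v w
    · rw [if_pos (hiff.mpr h), if_pos h]
    · rw [if_neg fun h' => h (hiff.mp h'), if_neg h]
  have hA11 : ∀ v w, A (Sum.inl (v, 1)) (Sum.inl (w, 1)) = gA G v w := by
    intro v w
    have hiff : Ghat.Adj (Sum.inl (v, 1)) (Sum.inl (w, 1)) ↔ G.Adj v w := by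
      rw [hGhat]
      constructor
      · rintro (h | ⟨x, hx, ⟨h1, h2⟩ | ⟨h1, h2⟩⟩)
        · exact (hC1 1 v w).mp h
        · exact absurd (congrArg Prod.snd (Sum.inl.inj h1)) (show ((1:Fin 2) ≠ 0) by decide)
        · exact absurd (congrArg Prod.snd (Sum.inl.inj h1)) (show ((1:Fin 2) ≠ 0) by decide)
      · intro h; exact Or.inl ((hC1 1 v w).mpr h)
    simp only [hAdef, SimpleGraph.adjMatrix_apply]
    unfold gA
    by_cases h : G.Adj v w
    · rw [if_pos (hiff.mpr h), if_pos h]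
    · rw [if_neg fun h' => h (hiff.mp h'), if_neg h]
  have hA01 : ∀ v w, A (Sum.inl (v, 0)) (Sum.inl (w, 1)) = bm G vc u σ v w := by
    intro v w
    have hiff : Ghat.Adj (Sum.inl (v, 0)) (Sum.inl (w, 1)) ↔
        SameOrbit G vc u v ∧ w = σ v := by
      rw [hGhat]
      constructor
      · rintro (h | ⟨x, hx, ⟨h1, h2⟩ | ⟨h1, h2⟩⟩)
        · exact absurd h (hC2 v w)
        · have hv : v = x := congrArg Prod.fst (Sum.inl.inj h1)
          have hw : w = σ x := congrArg Prod.fst (Sum.inl.inj h2)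
          exact ⟨by rw [hv]; exact hx, by rw [hv]; exact hw⟩
        · exact absurd (congrArg Prod.snd (Sum.inl.inj h1)) (show ((1:Fin 2) ≠ 0) by decide)
      · rintro ⟨hv, hw⟩
        exact Or.inr ⟨v, hv, Or.inl ⟨rfl, by rw [hw]⟩⟩
    simp only [hAdef, SimpleGraph.adjMatrix_apply]
    unfold bm
    by_cases h : SameOrbit G vc u v ∧ w = σ v
    · rw [if_pos (hiff.mpr h), if_pos h]
    · rw [if_neg fun h' => h (hiff.mp h'), if_neg h]
  have hA10 : ∀ v w, A (Sum.inl (v, 1)) (Sum.inl (w, 0)) = bm G vc u σ w v := by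
    intro v w
    have hiff : Ghat.Adj (Sum.inl (v, 1)) (Sum.inl (w, 0)) ↔
        SameOrbit G vc u w ∧ v = σ w := by
      rw [hGhat]
      constructor
      · rintro (h | ⟨x, hx, ⟨h1, h2⟩ | ⟨h1, h2⟩⟩)
        · exact absurd h.symm (hC2 w v)
        · exact absurd (congrArg Prod.snd (Sum.inl.inj h1)) (show ((1:Fin 2) ≠ 0) by decide)
        · have hw : w = x := congrArg Prod.fst (Sum.inl.inj h1)
          have hv : v = σ x := congrArg Prod.fst (Sum.inl.inj h2)
          exact ⟨by rw [hw]; exact hx, by rw [hw]; exact hv⟩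
      · rintro ⟨hw, hv⟩
        exact Or.inr ⟨w, hw, Or.inr ⟨rfl, by rw [hv]⟩⟩
    simp only [hAdef, SimpleGraph.adjMatrix_apply]
    unfold bm
    by_cases h : SameOrbit G vc u w ∧ v = σ w
    · rw [if_pos (hiff.mpr h), if_pos h]
    · rw [if_neg fun h' => h (hiff.mp h'), if_neg h]
  have hAlr : ∀ (i : Fin 2) v y, A (Sum.inl (v, i)) (Sum.inr y) = cm Gt i v y := by
    intro i v y
    have hiff : Ghat.Adj (Sum.inl (v, i)) (Sum.inr y) ↔
        Gt.Adj (Sum.inl (v, i)) (Sum.inr y) := by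
      rw [hGhat]
      constructor
      · rintro (h | ⟨x, hx, ⟨h1, h2⟩ | ⟨h1, h2⟩⟩)
        · exact h
        · exact absurd h2 Sum.inr_ne_inl
        · exact absurd h1 Sum.inr_ne_inl
      · exact Or.inl
    simp only [hAdef, SimpleGraph.adjMatrix_apply]
    unfold cm
    by_cases h : Gt.Adj (Sum.inl (v, i)) (Sum.inr y)
    · rw [if_pos (hiff.mpr h), if_pos h]
    · rw [if_neg fun h' => h (hiff.mp h'), if_neg h]
  have hArl : ∀ (i : Fin 2) v y, A (Sum.inr y) (Sum.inl (v, i)) = cm Gt i v y := by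
    intro i v y
    rw [hAsym]
    exact hAlr i v y
  have hQA : Qm G vc * A = A * Qm G vc :=
    qa_comm G vc u σ Gt hσ hC4 A hA00 hA11 hA01 hA10 hAlr hArl
  have hQs0 : Qm (W := W) G vc *ᵥ (Pi.single (Sum.inl (vc, 0)) 1 : V × Fin 2 ⊕ W → ℝ) =
      (Pi.single (Sum.inl (vc, 1)) 1 : V × Fin 2 ⊕ W → ℝ) := by
    rw [Matrix.mulVec_single]
    funext a
    rw [Pi.smul_apply, op_smul_eq_mul, mul_one]
    exact qm_col0 G vc a
  have hQs1 : Qm (W := W) G vc *ᵥ (Pi.single (Sum.inl (vc, 1)) 1 : V × Fin 2 ⊕ W → ℝ) =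
      (Pi.single (Sum.inl (vc, 0)) 1 : V × Fin 2 ⊕ W → ℝ) := by
    rw [Matrix.mulVec_single]
    funext a
    rw [Pi.smul_apply, op_smul_eq_mul, mul_one]
    exact qm_col1 G vc a
  have hQplus : Qm G vc *ᵥ
      ((Pi.single (Sum.inl (vc, 0)) 1 : V × Fin 2 ⊕ W → ℝ) + Pi.single (Sum.inl (vc, 1)) 1) =
      (Pi.single (Sum.inl (vc, 0)) 1 : V × Fin 2 ⊕ W → ℝ) + Pi.single (Sum.inl (vc, 1)) 1 := by
    rw [Matrix.mulVec_add, hQs0, hQs1, add_comm]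
  have hQminus : Qm G vc *ᵥ
      ((Pi.single (Sum.inl (vc, 0)) 1 : V × Fin 2 ⊕ W → ℝ) - Pi.single (Sum.inl (vc, 1)) 1) =
      -((Pi.single (Sum.inl (vc, 0)) 1 : V × Fin 2 ⊕ W → ℝ) - Pi.single (Sum.inl (vc, 1)) 1) := by
    rw [Matrix.mulVec_sub, hQs0, hQs1]
    exact (neg_sub _ _).symm
  have hgen : ∀ j k : ℕ,
      ((A ^ j) *ᵥ ((Pi.single (Sum.inl (vc, 0)) 1 : V × Fin 2 ⊕ W → ℝ) +
        Pi.single (Sum.inl (vc, 1)) 1)) ⬝ᵥ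
      ((A ^ k) *ᵥ ((Pi.single (Sum.inl (vc, 0)) 1 : V × Fin 2 ⊕ W → ℝ) -
        Pi.single (Sum.inl (vc, 1)) 1)) = 0 := by
    intro j k
    have hcj := ((show Commute (Qm (W := W) G vc) A from hQA).pow_right j).eq
    have hck := ((show Commute (Qm (W := W) G vc) A from hQA).pow_right k).eq
    have h1 : Qm G vc *ᵥ ((A ^ j) *ᵥ ((Pi.single (Sum.inl (vc, 0)) 1 : V × Fin 2 ⊕ W → ℝ) +
        Pi.single (Sum.inl (vc, 1)) 1)) = (A ^ j) *ᵥ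
        ((Pi.single (Sum.inl (vc, 0)) 1 : V × Fin 2 ⊕ W → ℝ) + Pi.single (Sum.inl (vc, 1)) 1) := by
      rw [Matrix.mulVec_mulVec, hcj, ← Matrix.mulVec_mulVec, hQplus]
    have h2 : Qm G vc *ᵥ ((A ^ k) *ᵥ ((Pi.single (Sum.inl (vc, 0)) 1 : V × Fin 2 ⊕ W → ℝ) -
        Pi.single (Sum.inl (vc, 1)) 1)) = -((A ^ k) *ᵥ
        ((Pi.single (Sum.inl (vc, 0)) 1 : V × Fin 2 ⊕ W → ℝ) - Pi.single (Sum.inl (vc, 1)) 1)) := by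
      rw [Matrix.mulVec_mulVec, hck, ← Matrix.mulVec_mulVec, hQminus, Matrix.mulVec_neg]
    have key : ((A ^ j) *ᵥ ((Pi.single (Sum.inl (vc, 0)) 1 : V × Fin 2 ⊕ W → ℝ) +
        Pi.single (Sum.inl (vc, 1)) 1)) ⬝ᵥ
        ((A ^ k) *ᵥ ((Pi.single (Sum.inl (vc, 0)) 1 : V × Fin 2 ⊕ W → ℝ) -
        Pi.single (Sum.inl (vc, 1)) 1)) =
        -(((A ^ j) *ᵥ ((Pi.single (Sum.inl (vc, 0)) 1 : V × Fin 2 ⊕ W → ℝ) +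
        Pi.single (Sum.inl (vc, 1)) 1)) ⬝ᵥ
        ((A ^ k) *ᵥ ((Pi.single (Sum.inl (vc, 0)) 1 : V × Fin 2 ⊕ W → ℝ) -
        Pi.single (Sum.inl (vc, 1)) 1))) := by
      conv_lhs => rw [← h1]
      rw [← Matrix.vecMul_transpose, ← Matrix.dotProduct_mulVec, qm_transpose, h2,
        dotProduct_neg]
    linarith [key]
  unfold ACospectral
  intro x hx y hy
  have inner : ∀ (j : ℕ), ∀ y' ∈ Submodule.span ℝ
      {z : V × Fin 2 ⊕ W → ℝ | ∃ k : ℕ, z = (A ^ k) *ᵥ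
        (Pi.single (Sum.inl (vc, 0)) 1 - Pi.single (Sum.inl (vc, 1)) 1)},
      ((A ^ j) *ᵥ ((Pi.single (Sum.inl (vc, 0)) 1 : V × Fin 2 ⊕ W → ℝ) +
        Pi.single (Sum.inl (vc, 1)) 1)) ⬝ᵥ y' = 0 := by
    intro j y' hy'
    refine Submodule.span_induction ?_ ?_ ?_ ?_ hy'
    · rintro z ⟨k, rfl⟩
      exact hgen j k
    · exact dotProduct_zero _
    · intro a b _ _ ha hb
      rw [dotProduct_add, ha, hb, add_zero]
    · intro r a _ ha
      rw [dotProduct_smul, ha, smul_zero]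
  refine Submodule.span_induction ?_ ?_ ?_ ?_ hx
  · rintro z ⟨j, rfl⟩
    exact inner j y hy
  · exact zero_dotProduct _
  · intro a b _ _ ha hb
    rw [add_dotProduct, ha, hb, add_zero]
  · intro r a _ ha
    rw [smul_dotProduct, ha, smul_zero]
end
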